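/- Let α : ℕ → ℂ and M ≥ 1 satisfy |α_n| ≤ M^n for all n ≥ 1, and set a_k = ∑_{n=1}^k α_n · cos((k−n)π/2) · n^k / ((k−n)!!·(k+n)!!) for k ≥ 1. Then for every z ∈ ℂ with |z| < 1/(e·M), the series ∑_{n=1}^∞ α_n · J_n(n·z) and ∑_{k=1}^∞ a_k · z^k are both summable and are equal. -/

import Mathlib

/-!
Expanding each `J_n(nz)` in its power series turns `∑ α_n J_n(nz)` into a double series over
`(n, j)` whose terms are bounded by `ρⁿ 2⁻ʲ` with `ρ = M e|z|/2 · e^{|z|²/2} < 1`, using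
`nⁿ ≤ eⁿ n!` and `n! nʲ ≤ (n + j)!`. The double series is therefore absolutely summable and may be
regrouped by the power `k = n + 2j` of `z`: the cosine kills the terms with `k - n` odd, and
`(2m)‼ = 2ᵐ m!` identifies the remaining ones with the summands of `a_k`.
-/

/-- The Bessel function of the first kind of (integer) order `n`,
defined by its everywhere-convergent power series. -/
noncomputable def besselJ (n : ℕ) (z : ℂ) : ℂ :=
  ∑' j : ℕ, ((-1 : ℂ) ^ j / ((Nat.factorial j : ℂ) * (Nat.factorial (n + j) : ℂ))) *
    (z / 2) ^ (n + 2 * j)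

open Nat Real Finset

theorem HasSum.regroup_add_two_mul {E : Type*} [AddCommMonoid E] [TopologicalSpace E]
    [ContinuousAdd E] [RegularSpace E] {F : ℕ × ℕ → E} {a : E} (hF : HasSum F a) :
    HasSum (fun k ↦ ∑ i ∈ range (k + 1), if Even (k - i) then F (i, (k - i) / 2) else 0) a := by
  set G : ℕ × ℕ → E := fun q ↦ if q.2 ≤ q.1 ∧ Even (q.1 - q.2) then F (q.2, (q.1 - q.2) / 2) else 0
  let e : ℕ × ℕ → ℕ × ℕ := fun p ↦ (p.1 + 2 * p.2, p.1)
  have he : Function.Injective e := fun p q h ↦ by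
    simp only [e, Prod.mk.injEq] at h
    ext <;> omega
  have hGe : G ∘ e = F := funext fun p ↦ by
    simp [G, e]
  have hG : HasSum G a := by
    refine (he.hasSum_iff fun q hq ↦ if_neg ?_).mp (by rwa [hGe])
    rintro ⟨hle, m, hm⟩
    refine hq ⟨(q.2, m), Prod.ext ?_ rfl⟩
    change q.2 + 2 * m = q.1
    omega
  refine hG.prod_fiberwise fun k ↦ ?_
  have hfin : HasSum (fun i ↦ G (k, i)) (∑ i ∈ range (k + 1), G (k, i)) :=
    hasSum_sum_of_ne_finset_zero fun i hi ↦ if_neg fun h ↦ hi (mem_range.mpr (by omega))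
  convert hfin using 1
  refine sum_congr rfl fun i hi ↦ ?_
  simp [G, Nat.lt_succ_iff.mp (mem_range.mp hi)]

noncomputable def besselTerm (n j : ℕ) (z : ℂ) : ℂ :=
  (-1 : ℂ) ^ j / ((j ! : ℂ) * ((n + j)! : ℂ)) * (z / 2) ^ (n + 2 * j)

theorem besselJ_eq_tsum (n : ℕ) (z : ℂ) : besselJ n z = ∑' j, besselTerm n j z := rfl

theorem norm_besselTerm (n j : ℕ) (z : ℂ) :
    ‖besselTerm n j z‖ = (‖z‖ / 2) ^ (n + 2 * j) / (j ! * (n + j)!) := by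
  simp [besselTerm, div_mul_eq_mul_div]

theorem cos_two_mul_nat_mul_pi_div_two (m : ℕ) : cos ((2 * m : ℕ) * π / 2) = (-1) ^ m := by
  rw [← cos_nat_mul_pi]; push_cast; ring_nf

theorem cos_two_mul_nat_add_one_mul_pi_div_two (m : ℕ) : cos ((2 * m + 1 : ℕ) * π / 2) = 0 := by
  rw [show ((2 * m + 1 : ℕ) : ℝ) * π / 2 = m * π + π / 2 by push_cast; ring,
    cos_add_pi_div_two, sin_nat_mul_pi, neg_zero]

noncomputable def kapteynTerm (α : ℕ → ℂ) (k n : ℕ) : ℂ :=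
  α n * (cos (((k - n : ℕ) : ℝ) * π / 2) : ℂ) * (n : ℂ) ^ k /
    (((k - n)‼ : ℂ) * ((k + n)‼ : ℂ))

theorem kapteynTerm_add_two_mul (α : ℕ → ℂ) (n m : ℕ) (z : ℂ) :
    kapteynTerm α (n + 2 * m) n * z ^ (n + 2 * m) = α n * besselTerm n m (n * z) := by
  have hn : n + 2 * m + n = 2 * (n + m) := by ring
  rw [kapteynTerm, besselTerm, Nat.add_sub_cancel_left, cos_two_mul_nat_mul_pi_div_two, hn,
    doubleFactorial_two_mul, doubleFactorial_two_mul, div_pow, mul_pow]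
  push_cast
  rw [show (2 : ℂ) ^ (n + 2 * m) = 2 ^ m * 2 ^ (n + m) by ring]
  field_simp

theorem kapteynTerm_add_two_mul_add_one (α : ℕ → ℂ) (n m : ℕ) :
    kapteynTerm α (n + (2 * m + 1)) n = 0 := by
  rw [kapteynTerm, Nat.add_sub_cancel_left, cos_two_mul_nat_add_one_mul_pi_div_two]
  simp

theorem kapteynTerm_mul_pow (α : ℕ → ℂ) {k n : ℕ} (hnk : n ≤ k) (z : ℂ) :
    kapteynTerm α k n * z ^ k =
      if Even (k - n) then α n * besselTerm n ((k - n) / 2) (n * z) else 0 := by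
  obtain ⟨m, hm | hm⟩ := Nat.even_or_odd' (k - n)
  · obtain rfl : k = n + 2 * m := by omega
    simp [kapteynTerm_add_two_mul]
  · obtain rfl : k = n + (2 * m + 1) := by omega
    simp [kapteynTerm_add_two_mul_add_one, hm]

theorem natCast_pow_le_exp_one_pow_mul_factorial (N : ℕ) : (N : ℝ) ^ N ≤ exp 1 ^ N * N ! := by
  have h := Real.pow_div_factorial_le_exp (N : ℝ) N.cast_nonneg N
  rwa [div_le_iff₀ (by positivity), ← exp_one_pow] at h

theorem natCast_pow_add_two_mul_le (N j : ℕ) :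
    (N : ℝ) ^ (N + 2 * j) ≤ exp 1 ^ N * N ^ j * (N + j)! := by
  have hfac : (N ! : ℝ) * N ^ j ≤ (N + j)! := by
    exact_mod_cast (Nat.mul_le_mul_left _ (Nat.pow_le_pow_left N.le_succ j)).trans
      Nat.factorial_mul_pow_le_factorial
  calc (N : ℝ) ^ (N + 2 * j) = N ^ N * N ^ j * N ^ j := by ring
    _ ≤ exp 1 ^ N * N ! * N ^ j * N ^ j := by
        gcongr; exact natCast_pow_le_exp_one_pow_mul_factorial N
    _ = exp 1 ^ N * N ^ j * (N ! * N ^ j) := by ring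
    _ ≤ exp 1 ^ N * N ^ j * (N + j)! := by gcongr

/-- The factor `(1 / 2) ^ j` is split off so that the bound is summable over both indices. -/
theorem norm_besselTerm_natCast_mul_le (N j : ℕ) (z : ℂ) :
    ‖besselTerm N j (N * z)‖ ≤ (exp 1 * ‖z‖ / 2 * exp (‖z‖ ^ 2 / 2)) ^ N * (1 / 2) ^ j := by
  set r := ‖z‖
  have hexp : (N * r ^ 2 / 2) ^ j / j ! ≤ exp (N * r ^ 2 / 2) :=
    Real.pow_div_factorial_le_exp _ (by positivity) j
  rw [norm_besselTerm, norm_mul, Complex.norm_natCast, mul_div_assoc, mul_pow]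
  calc (N : ℝ) ^ (N + 2 * j) * (r / 2) ^ (N + 2 * j) / (j ! * (N + j)!)
      ≤ exp 1 ^ N * N ^ j * (N + j)! * (r / 2) ^ (N + 2 * j) / (j ! * (N + j)!) := by
        gcongr; exact natCast_pow_add_two_mul_le N j
    _ = (exp 1 * r / 2) ^ N * ((N * r ^ 2 / 2) ^ j / j !) * (1 / 2) ^ j := by
        field_simp
        ring
    _ ≤ (exp 1 * r / 2) ^ N * exp (N * r ^ 2 / 2) * (1 / 2) ^ j := by gcongr
    _ = (exp 1 * r / 2 * exp (r ^ 2 / 2)) ^ N * (1 / 2) ^ j := by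
        rw [mul_pow, ← exp_nat_mul]; ring_nf

theorem kapteyn_ratio_lt_one {M r : ℝ} (hM : 1 ≤ M) (hr : 0 ≤ r) (hMr : exp 1 * M * r < 1) :
    M * (exp 1 * r / 2 * exp (r ^ 2 / 2)) < 1 := by
  have he : 2 < exp 1 := lt_trans (by norm_num) exp_one_gt_d9
  have hr1 : r < 1 :=
    (le_mul_of_one_le_left hr (by nlinarith : 1 ≤ exp 1 * M)).trans_lt hMr
  have hexp : exp (r ^ 2 / 2) < 2 := by
    have h4 : exp (1 / 2) ^ 2 < 2 ^ 2 := by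
      rw [← exp_nat_mul]; norm_num; linarith [exp_one_lt_d9]
    calc exp (r ^ 2 / 2) ≤ exp (1 / 2) := exp_le_exp.mpr (by nlinarith)
      _ < 2 := lt_of_pow_lt_pow_left₀ 2 (by norm_num) h4
  calc M * (exp 1 * r / 2 * exp (r ^ 2 / 2)) = exp 1 * M * r * exp (r ^ 2 / 2) / 2 := by ring
    _ < 1 := by
      rw [div_lt_one two_pos]
      calc exp 1 * M * r * exp (r ^ 2 / 2) ≤ 1 * exp (r ^ 2 / 2) := by gcongr
        _ < 2 := by linarith

theorem summable_mul_besselTerm {α : ℕ → ℂ} {M : ℝ} (hM : 1 ≤ M)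
    (hα : ∀ n, 1 ≤ n → ‖α n‖ ≤ M ^ n) {z : ℂ} (hz : exp 1 * M * ‖z‖ < 1) :
    Summable fun p : ℕ × ℕ ↦ α (p.1 + 1) * besselTerm (p.1 + 1) p.2 ((p.1 + 1 : ℕ) * z) := by
  set ρ := M * (exp 1 * ‖z‖ / 2 * exp (‖z‖ ^ 2 / 2))
  have hρ0 : 0 ≤ ρ := by have := zero_le_one.trans hM; positivity
  have hρ : Summable fun n : ℕ ↦ ρ ^ (n + 1) :=
    (summable_nat_add_iff 1).mpr (summable_geometric_of_lt_one hρ0 (kapteyn_ratio_lt_one hM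
      (norm_nonneg z) hz))
  have hhalf : Summable fun j : ℕ ↦ (1 / 2 : ℝ) ^ j :=
    summable_geometric_of_lt_one (by norm_num) (by norm_num)
  refine Summable.of_norm_bounded (hρ.mul_of_nonneg hhalf (fun _ ↦ by positivity)
    (fun _ ↦ by positivity)) fun ⟨n, j⟩ ↦ ?_
  rw [norm_mul, mul_pow, mul_assoc]
  gcongr
  · exact hα _ n.succ_pos
  · exact norm_besselTerm_natCast_mul_le _ _ _

open Nat in
/-- If `|α_n| ≤ Mⁿ` and `a_k = ∑_{n=1}^k α_n cos((k−n)π/2) n^k / ((k−n)‼ (k+n)‼)`,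
then for `|z| < 1/(eM)` the series `∑_{n≥1} α_n J_n(nz)` and `∑_{k≥1} a_k z^k`
are both summable and are equal. -/
theorem kapteyn_general_inversion (α : ℕ → ℂ) (M : ℝ) (hM : 1 ≤ M)
    (hα : ∀ n : ℕ, 1 ≤ n → ‖α n‖ ≤ M ^ n)
    (a : ℕ → ℂ)
    (ha : ∀ k : ℕ, 1 ≤ k →
      a k = ∑ n ∈ Finset.Icc 1 k,
        α n * (Real.cos (((k - n : ℕ) : ℝ) * Real.pi / 2) : ℂ) * (n : ℂ) ^ k /
          (((k - n)‼ : ℂ) * ((k + n)‼ : ℂ)))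
    (z : ℂ) (hz : ‖z‖ < 1 / (Real.exp 1 * M)) :
    Summable (fun n : ℕ => α (n + 1) * besselJ (n + 1) ((n + 1 : ℕ) * z)) ∧
    Summable (fun k : ℕ => a (k + 1) * z ^ (k + 1)) ∧
    ∑' n : ℕ, α (n + 1) * besselJ (n + 1) ((n + 1 : ℕ) * z) =
      ∑' k : ℕ, a (k + 1) * z ^ (k + 1) := by
  have hF := (summable_mul_besselTerm hM hα (z := z) (by
    rwa [lt_div_iff₀ (by positivity), mul_comm] at hz)).hasSum
  have hL := hF.prod_fiberwise fun n ↦ by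
    simpa only [besselJ_eq_tsum, tsum_mul_left] using (hF.summable.prod_factor n).hasSum
  have hR := hF.regroup_add_two_mul
  have hcoeff : ∀ k : ℕ, a (k + 1) * z ^ (k + 1) =
      ∑ i ∈ range (k + 1), if Even (k - i) then
        α (i + 1) * besselTerm (i + 1) ((k - i) / 2) ((i + 1 : ℕ) * z) else 0 := fun k ↦ by
    rw [ha (k + 1) k.succ_pos, sum_mul, ← Ico_add_one_right_eq_Icc, sum_Ico_eq_sum_range,
      Nat.add_sub_cancel]
    refine sum_congr rfl fun i hi ↦ ?_
    rw [add_comm 1 i, ← Nat.add_sub_add_right k 1 i, ← kapteynTerm_mul_pow α (by simpa using hi)]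
    rfl
  simp only [← hcoeff] at hR
  exact ⟨hL.summable, hR.summable, hL.tsum_eq.trans hR.tsum_eq.symm⟩
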